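/- arXiv:0712.2764 — 3 statements merged into one kernel-verified Lean document; each statement's English description precedes it below -/
import Mathlib

section
/- Let A, B, C : ℝ² → ℝ be smooth with A nowhere zero, let v¹, v², v³ be smooth solutions of v_t = A v_{xx} + B v_x + C v with W := v¹v²_x − v¹_xv² nowhere zero, and define g¹ := −A(v¹v²_{xx} − v¹_{xx}v²)/W − B, g² := −A(v¹_xv²_{xx} − v¹_{xx}v²_x)/W + C, g³ := (A/W)·det[[v¹, v¹_x, v¹_{xx}], [v², v²_x, v²_{xx}], [v³, v³_x, v³_{xx}]]. Then for all constants c₁, c₂ ∈ ℝ the function u := c₁v¹ + c₂v² + v³ satisfies the invariant surface condition u_t + g¹u_x − g²u − g³ = 0. -/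
/-- Partial derivative with respect to the first (time) variable. -/
noncomputable def Dt (u : ℝ → ℝ → ℝ) : ℝ → ℝ → ℝ := fun t x => deriv (fun s => u s x) t

/-- Partial derivative with respect to the second (space) variable. -/
noncomputable def Dx (u : ℝ → ℝ → ℝ) : ℝ → ℝ → ℝ := fun t x => deriv (fun y => u t y) x

/-- Smoothness of a function of two real variables. -/
def Smooth2 (u : ℝ → ℝ → ℝ) : Prop := ContDiff ℝ (⊤ : ℕ∞) (fun p : ℝ × ℝ => u p.1 p.2)

lemma diffT (v : ℝ → ℝ → ℝ) (hv : Smooth2 v) (t x : ℝ) :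
    DifferentiableAt ℝ (fun s => v s x) t := by
  have := (hv.differentiable (by simp)).comp (differentiable_id.prodMk (differentiable_const x))
  exact this t

lemma diffX (v : ℝ → ℝ → ℝ) (hv : Smooth2 v) (t x : ℝ) :
    DifferentiableAt ℝ (fun y => v t y) x := by
  have := (hv.differentiable (by simp)).comp ((differentiable_const t).prodMk differentiable_id)
  exact this x

lemma DtLin (v1 v2 v3 : ℝ → ℝ → ℝ) (hv1 : Smooth2 v1) (hv2 : Smooth2 v2) (hv3 : Smooth2 v3)
    (c1 c2 t x : ℝ) :
    Dt (fun t x => c1 * v1 t x + c2 * v2 t x + v3 t x) t x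
      = c1 * Dt v1 t x + c2 * Dt v2 t x + Dt v3 t x := by
  unfold Dt
  rw [deriv_fun_add (((diffT v1 hv1 t x).const_mul c1).fun_add ((diffT v2 hv2 t x).const_mul c2))
      (diffT v3 hv3 t x),
    deriv_fun_add ((diffT v1 hv1 t x).const_mul c1) ((diffT v2 hv2 t x).const_mul c2),
    deriv_const_mul c1 (diffT v1 hv1 t x), deriv_const_mul c2 (diffT v2 hv2 t x)]

lemma DxLin (v1 v2 v3 : ℝ → ℝ → ℝ) (hv1 : Smooth2 v1) (hv2 : Smooth2 v2) (hv3 : Smooth2 v3)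
    (c1 c2 t x : ℝ) :
    Dx (fun t x => c1 * v1 t x + c2 * v2 t x + v3 t x) t x
      = c1 * Dx v1 t x + c2 * Dx v2 t x + Dx v3 t x := by
  unfold Dx
  rw [deriv_fun_add (((diffX v1 hv1 t x).const_mul c1).fun_add ((diffX v2 hv2 t x).const_mul c2))
      (diffX v3 hv3 t x),
    deriv_fun_add ((diffX v1 hv1 t x).const_mul c1) ((diffX v2 hv2 t x).const_mul c2),
    deriv_const_mul c1 (diffX v1 hv1 t x), deriv_const_mul c2 (diffX v2 hv2 t x)]

theorem stmt_4 (A B C : ℝ → ℝ → ℝ) (hA : Smooth2 A) (hB : Smooth2 B) (hC : Smooth2 C)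
    (hA0 : ∀ t x, A t x ≠ 0)
    (v1 v2 v3 : ℝ → ℝ → ℝ) (hv1 : Smooth2 v1) (hv2 : Smooth2 v2) (hv3 : Smooth2 v3)
    (hv1sol : ∀ t x, Dt v1 t x = A t x * Dx (Dx v1) t x + B t x * Dx v1 t x + C t x * v1 t x)
    (hv2sol : ∀ t x, Dt v2 t x = A t x * Dx (Dx v2) t x + B t x * Dx v2 t x + C t x * v2 t x)
    (hv3sol : ∀ t x, Dt v3 t x = A t x * Dx (Dx v3) t x + B t x * Dx v3 t x + C t x * v3 t x)
    (W : ℝ → ℝ → ℝ) (hW : ∀ t x, W t x = v1 t x * Dx v2 t x - Dx v1 t x * v2 t x)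
    (hW0 : ∀ t x, W t x ≠ 0)
    (g1 g2 g3 : ℝ → ℝ → ℝ)
    (hg1 : ∀ t x, g1 t x =
      - A t x * (v1 t x * Dx (Dx v2) t x - Dx (Dx v1) t x * v2 t x) / W t x - B t x)
    (hg2 : ∀ t x, g2 t x =
      - A t x * (Dx v1 t x * Dx (Dx v2) t x - Dx (Dx v1) t x * Dx v2 t x) / W t x + C t x)
    (hg3 : ∀ t x, g3 t x = A t x / W t x *
      Matrix.det !![v1 t x, Dx v1 t x, Dx (Dx v1) t x;
                    v2 t x, Dx v2 t x, Dx (Dx v2) t x;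
                    v3 t x, Dx v3 t x, Dx (Dx v3) t x]) :
    ∀ c1 c2 : ℝ, ∀ t x,
      Dt (fun t x => c1 * v1 t x + c2 * v2 t x + v3 t x) t x
      + g1 t x * Dx (fun t x => c1 * v1 t x + c2 * v2 t x + v3 t x) t x
      - g2 t x * (c1 * v1 t x + c2 * v2 t x + v3 t x) - g3 t x = 0 := by
  intro c1 c2 t x
  rw [DtLin v1 v2 v3 hv1 hv2 hv3 c1 c2 t x, DxLin v1 v2 v3 hv1 hv2 hv3 c1 c2 t x,
    hv1sol, hv2sol, hv3sol, hg1, hg2, hg3, hW, Matrix.det_fin_three]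
  have hW' : v1 t x * Dx v2 t x - Dx v1 t x * v2 t x ≠ 0 := by rw [← hW]; exact hW0 t x
  simp only [Matrix.of_apply, Matrix.cons_val', Matrix.cons_val_zero, Matrix.cons_val_one,
    Matrix.cons_val_two, Matrix.empty_val', Matrix.cons_val_fin_one, Matrix.vecHead, Matrix.vecTail,
    Function.comp_apply, Matrix.cons_val_succ]
  field_simp
  ring
end

section
/- Let A, B, C : ℝ² → ℝ be smooth with A nowhere zero, and let η : ℝ³ → ℝ, η = η(t,x,u), be a smooth solution of the determining equation η_t = A(η_{xx} + 2ηη_{xu} + η²η_{uu}) + A_x(η_x + ηη_u) + B_xη + Bη_x + C(η − uη_u) + C_xu. Let f be a smooth solution of f_t = Af_{xx} + Bf_x + Cf. Then the function η̃(t,x,u) := η(t, x, u − f(t,x)) + f_x(t,x) is also a solution of the same determining equation. -/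
/-- Partial derivative in `t` of a function `η = η(t,x,u)`. -/
noncomputable def Et (η : ℝ → ℝ → ℝ → ℝ) : ℝ → ℝ → ℝ → ℝ :=
  fun t x v => deriv (fun s => η s x v) t

/-- Partial derivative in `x` of a function `η = η(t,x,u)`. -/
noncomputable def Ex (η : ℝ → ℝ → ℝ → ℝ) : ℝ → ℝ → ℝ → ℝ :=
  fun t x v => deriv (fun y => η t y v) x

/-- Partial derivative in `u` of a function `η = η(t,x,u)`. -/
noncomputable def Eu (η : ℝ → ℝ → ℝ → ℝ) : ℝ → ℝ → ℝ → ℝ :=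
  fun t x v => deriv (fun w => η t x w) v

/-- Smoothness of a function of three real variables. -/
def Smooth3 (η : ℝ → ℝ → ℝ → ℝ) : Prop :=
  ContDiff ℝ (⊤ : ℕ∞) (fun p : ℝ × ℝ × ℝ => η p.1 p.2.1 p.2.2)

/-- The determining equation for reduction operators `∂_x + η(t,x,u)∂_u`
of the equation `u_t = A u_{xx} + B u_x + C u`. -/
def DetEq0 (A B C : ℝ → ℝ → ℝ) (η : ℝ → ℝ → ℝ → ℝ) : Prop :=
  ∀ t x v, Et η t x v =
    A t x * (Ex (Ex η) t x v + 2 * η t x v * Eu (Ex η) t x v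
      + (η t x v) ^ 2 * Eu (Eu η) t x v)
    + Dx A t x * (Ex η t x v + η t x v * Eu η t x v)
    + Dx B t x * η t x v + B t x * Ex η t x v
    + C t x * (η t x v - v * Eu η t x v) + Dx C t x * v

noncomputable def T3 (g : ℝ → ℝ → ℝ → ℝ) : ℝ × ℝ × ℝ → ℝ := fun p => g p.1 p.2.1 p.2.2
noncomputable def T2 (f : ℝ → ℝ → ℝ) : ℝ × ℝ → ℝ := fun p => f p.1 p.2

lemma hasDerivAt_comp3 {g : ℝ → ℝ → ℝ → ℝ} (hg : Smooth3 g) {a b c : ℝ → ℝ} {a' b' c' : ℝ}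
    {s : ℝ} (ha : HasDerivAt a a' s) (hb : HasDerivAt b b' s) (hc : HasDerivAt c c' s) :
    HasDerivAt (fun r => g (a r) (b r) (c r))
      (fderiv ℝ (T3 g) (a s, b s, c s) (a', b', c')) s := by
  have h1 : HasDerivAt (fun r => ((a r, b r, c r) : ℝ × ℝ × ℝ)) (a', b', c') s :=
    ha.prodMk (hb.prodMk hc)
  have h2 : HasFDerivAt (T3 g) (fderiv ℝ (T3 g) (a s, b s, c s)) (a s, b s, c s) :=
    (hg.differentiable (by simp) (a s, b s, c s)).hasFDerivAt
  exact h2.comp_hasDerivAt s h1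

lemma hasDerivAt_comp2 {f : ℝ → ℝ → ℝ} (hf : Smooth2 f) {a b : ℝ → ℝ} {a' b' : ℝ}
    {s : ℝ} (ha : HasDerivAt a a' s) (hb : HasDerivAt b b' s) :
    HasDerivAt (fun r => f (a r) (b r))
      (fderiv ℝ (T2 f) (a s, b s) (a', b')) s := by
  have h1 : HasDerivAt (fun r => ((a r, b r) : ℝ × ℝ)) (a', b') s := ha.prodMk hb
  have h2 : HasFDerivAt (T2 f) (fderiv ℝ (T2 f) (a s, b s)) (a s, b s) :=
    (hf.differentiable (by simp) (a s, b s)).hasFDerivAt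
  exact h2.comp_hasDerivAt s h1

lemma Et_eq {g : ℝ → ℝ → ℝ → ℝ} (hg : Smooth3 g) (t x v : ℝ) :
    Et g t x v = fderiv ℝ (T3 g) (t, x, v) (1, 0, 0) :=
  (hasDerivAt_comp3 hg (hasDerivAt_id t) (hasDerivAt_const t x) (hasDerivAt_const t v)).deriv

lemma Ex_eq {g : ℝ → ℝ → ℝ → ℝ} (hg : Smooth3 g) (t x v : ℝ) :
    Ex g t x v = fderiv ℝ (T3 g) (t, x, v) (0, 1, 0) :=
  (hasDerivAt_comp3 hg (hasDerivAt_const x t) (hasDerivAt_id x) (hasDerivAt_const x v)).deriv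

lemma Eu_eq {g : ℝ → ℝ → ℝ → ℝ} (hg : Smooth3 g) (t x v : ℝ) :
    Eu g t x v = fderiv ℝ (T3 g) (t, x, v) (0, 0, 1) :=
  (hasDerivAt_comp3 hg (hasDerivAt_const v t) (hasDerivAt_const v x) (hasDerivAt_id v)).deriv

lemma Dt_eq {f : ℝ → ℝ → ℝ} (hf : Smooth2 f) (t x : ℝ) :
    Dt f t x = fderiv ℝ (T2 f) (t, x) (1, 0) :=
  (hasDerivAt_comp2 hf (hasDerivAt_id t) (hasDerivAt_const t x)).deriv

lemma Dx_eq {f : ℝ → ℝ → ℝ} (hf : Smooth2 f) (t x : ℝ) :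
    Dx f t x = fderiv ℝ (T2 f) (t, x) (0, 1) :=
  (hasDerivAt_comp2 hf (hasDerivAt_const x t) (hasDerivAt_id x)).deriv

lemma clm_expand3 (L : ℝ × ℝ × ℝ →L[ℝ] ℝ) (a b c : ℝ) :
    L (a, b, c) = a * L (1, 0, 0) + b * L (0, 1, 0) + c * L (0, 0, 1) := by
  have h : ((a, b, c) : ℝ × ℝ × ℝ)
      = a • ((1:ℝ), (0:ℝ), (0:ℝ)) + b • ((0:ℝ), (1:ℝ), (0:ℝ)) + c • ((0:ℝ), (0:ℝ), (1:ℝ)) := by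
    simp [Prod.ext_iff]
  rw [h, map_add, map_add, map_smul, map_smul, map_smul]
  simp [smul_eq_mul]

lemma clm_expand2 (L : ℝ × ℝ →L[ℝ] ℝ) (a b : ℝ) :
    L (a, b) = a * L (1, 0) + b * L (0, 1) := by
  have h : ((a, b) : ℝ × ℝ) = a • ((1:ℝ), (0:ℝ)) + b • ((0:ℝ), (1:ℝ)) := by
    simp [Prod.ext_iff]
  rw [h, map_add, map_smul, map_smul]
  simp [smul_eq_mul]

lemma hasDerivAt_x {f : ℝ → ℝ → ℝ} (hf : Smooth2 f) (t x : ℝ) :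
    HasDerivAt (fun y => f t y) (Dx f t x) x := by
  have h := hasDerivAt_comp2 hf (hasDerivAt_const x t) (hasDerivAt_id x)
  rwa [← Dx_eq hf] at h

lemma hasDerivAt_t {f : ℝ → ℝ → ℝ} (hf : Smooth2 f) (t x : ℝ) :
    HasDerivAt (fun s => f s x) (Dt f t x) t := by
  have h := hasDerivAt_comp2 hf (hasDerivAt_id t) (hasDerivAt_const t x)
  rwa [← Dt_eq hf] at h

lemma comp_hasDerivAt_x {g : ℝ → ℝ → ℝ → ℝ} {f : ℝ → ℝ → ℝ} (hg : Smooth3 g)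
    (hf : Smooth2 f) (t x v : ℝ) :
    HasDerivAt (fun y => g t y (v - f t y))
      (Ex g t x (v - f t x) - Eu g t x (v - f t x) * Dx f t x) x := by
  have h := hasDerivAt_comp3 hg (hasDerivAt_const x t) (hasDerivAt_id x)
    ((hasDerivAt_x hf t x).const_sub v)
  convert h using 1
  simp only [id_eq] at h ⊢
  rw [clm_expand3, ← Ex_eq hg, ← Eu_eq hg]
  simp only [id]
  ring

lemma comp_hasDerivAt_t {g : ℝ → ℝ → ℝ → ℝ} {f : ℝ → ℝ → ℝ} (hg : Smooth3 g)
    (hf : Smooth2 f) (t x v : ℝ) :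
    HasDerivAt (fun s => g s x (v - f s x))
      (Et g t x (v - f t x) - Eu g t x (v - f t x) * Dt f t x) t := by
  have h := hasDerivAt_comp3 hg (hasDerivAt_id t) (hasDerivAt_const t x)
    ((hasDerivAt_t hf t x).const_sub v)
  convert h using 1
  simp only [id_eq] at h ⊢
  rw [clm_expand3, ← Et_eq hg, ← Eu_eq hg]
  simp only [id]
  ring

lemma comp_hasDerivAt_u {g : ℝ → ℝ → ℝ → ℝ} {f : ℝ → ℝ → ℝ} (hg : Smooth3 g)
    (t x v : ℝ) (c : ℝ) :
    HasDerivAt (fun w => g t x (w - c)) (Eu g t x (v - c)) v := by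
  have h := hasDerivAt_comp3 hg (hasDerivAt_const v t) (hasDerivAt_const v x)
    ((hasDerivAt_id v).sub_const c)
  convert h using 1
  simp only [id_eq] at h ⊢
  rw [clm_expand3, ← Eu_eq hg]
  simp only [id]
  ring_nf

lemma smooth3_Ex {g : ℝ → ℝ → ℝ → ℝ} (hg : Smooth3 g) : Smooth3 (Ex g) := by
  have h : ContDiff ℝ (⊤ : ℕ∞) (fun p : ℝ × ℝ × ℝ => fderiv ℝ (T3 g) p ((0:ℝ), (1:ℝ), (0:ℝ))) :=
    (hg.fderiv_right (by simp)).clm_apply contDiff_const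
  have he : (fun p : ℝ × ℝ × ℝ => Ex g p.1 p.2.1 p.2.2)
      = fun p : ℝ × ℝ × ℝ => fderiv ℝ (T3 g) p ((0:ℝ), (1:ℝ), (0:ℝ)) :=
    funext fun p => Ex_eq hg p.1 p.2.1 p.2.2
  unfold Smooth3
  rw [he]; exact h

lemma smooth3_Eu {g : ℝ → ℝ → ℝ → ℝ} (hg : Smooth3 g) : Smooth3 (Eu g) := by
  have h : ContDiff ℝ (⊤ : ℕ∞) (fun p : ℝ × ℝ × ℝ => fderiv ℝ (T3 g) p ((0:ℝ), (0:ℝ), (1:ℝ))) :=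
    (hg.fderiv_right (by simp)).clm_apply contDiff_const
  have he : (fun p : ℝ × ℝ × ℝ => Eu g p.1 p.2.1 p.2.2)
      = fun p : ℝ × ℝ × ℝ => fderiv ℝ (T3 g) p ((0:ℝ), (0:ℝ), (1:ℝ)) :=
    funext fun p => Eu_eq hg p.1 p.2.1 p.2.2
  unfold Smooth3
  rw [he]; exact h

lemma smooth2_Dx {f : ℝ → ℝ → ℝ} (hf : Smooth2 f) : Smooth2 (Dx f) := by
  have h : ContDiff ℝ (⊤ : ℕ∞) (fun p : ℝ × ℝ => fderiv ℝ (T2 f) p ((0:ℝ), (1:ℝ))) :=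
    (hf.fderiv_right (by simp)).clm_apply contDiff_const
  have he : (fun p : ℝ × ℝ => Dx f p.1 p.2)
      = fun p : ℝ × ℝ => fderiv ℝ (T2 f) p ((0:ℝ), (1:ℝ)) :=
    funext fun p => Dx_eq hf p.1 p.2
  unfold Smooth2
  rw [he]; exact h

lemma smooth2_Dt {f : ℝ → ℝ → ℝ} (hf : Smooth2 f) : Smooth2 (Dt f) := by
  have h : ContDiff ℝ (⊤ : ℕ∞) (fun p : ℝ × ℝ => fderiv ℝ (T2 f) p ((1:ℝ), (0:ℝ))) :=
    (hf.fderiv_right (by simp)).clm_apply contDiff_const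
  have he : (fun p : ℝ × ℝ => Dt f p.1 p.2)
      = fun p : ℝ × ℝ => fderiv ℝ (T2 f) p ((1:ℝ), (0:ℝ)) :=
    funext fun p => Dt_eq hf p.1 p.2
  unfold Smooth2
  rw [he]; exact h

lemma fderiv_eval {E : Type*} [NormedAddCommGroup E] [NormedSpace ℝ E]
    {F : E → E →L[ℝ] ℝ} {F'' : E →L[ℝ] E →L[ℝ] ℝ} {p : E}
    (h : HasFDerivAt F F'' p) (w u : E) :
    fderiv ℝ (fun q => F q w) p u = (F'' u) w := by
  have h2 : HasFDerivAt (fun q => F q w)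
      ((ContinuousLinearMap.apply ℝ ℝ w).comp F'') p :=
    (ContinuousLinearMap.apply ℝ ℝ w).hasFDerivAt.comp p h
  rw [h2.fderiv]
  simp

lemma clairaut3 {g : ℝ → ℝ → ℝ → ℝ} (hg : Smooth3 g) (t x v : ℝ) :
    Eu (Ex g) t x v = Ex (Eu g) t x v := by
  have hdiff : ∀ y, HasFDerivAt (T3 g) (fderiv ℝ (T3 g) y) y :=
    fun y => (hg.differentiable (by simp) y).hasFDerivAt
  have h2 : HasFDerivAt (fderiv ℝ (T3 g)) (fderiv ℝ (fderiv ℝ (T3 g)) (t, x, v)) (t, x, v) :=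
    (((hg.fderiv_right (m := (⊤ : ℕ∞)) (by simp)).differentiable (by simp)) (t, x, v)).hasFDerivAt
  have hsym := second_derivative_symmetric hdiff h2 ((0:ℝ), (0:ℝ), (1:ℝ)) ((0:ℝ), (1:ℝ), (0:ℝ))
  have e1 : Eu (Ex g) t x v
      = fderiv ℝ (fun q : ℝ × ℝ × ℝ => fderiv ℝ (T3 g) q ((0:ℝ), (1:ℝ), (0:ℝ))) (t, x, v)
          ((0:ℝ), (0:ℝ), (1:ℝ)) := by
    have hfun : T3 (Ex g) = fun q : ℝ × ℝ × ℝ => fderiv ℝ (T3 g) q ((0:ℝ), (1:ℝ), (0:ℝ)) :=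
      funext fun q => Ex_eq hg q.1 q.2.1 q.2.2
    rw [Eu_eq (smooth3_Ex hg), hfun]
  have e2 : Ex (Eu g) t x v
      = fderiv ℝ (fun q : ℝ × ℝ × ℝ => fderiv ℝ (T3 g) q ((0:ℝ), (0:ℝ), (1:ℝ))) (t, x, v)
          ((0:ℝ), (1:ℝ), (0:ℝ)) := by
    have hfun : T3 (Eu g) = fun q : ℝ × ℝ × ℝ => fderiv ℝ (T3 g) q ((0:ℝ), (0:ℝ), (1:ℝ)) :=
      funext fun q => Eu_eq hg q.1 q.2.1 q.2.2
    rw [Ex_eq (smooth3_Eu hg), hfun]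
  rw [e1, e2, fderiv_eval h2, fderiv_eval h2]
  exact hsym

lemma clairaut2 {f : ℝ → ℝ → ℝ} (hf : Smooth2 f) (t x : ℝ) :
    Dt (Dx f) t x = Dx (Dt f) t x := by
  have hdiff : ∀ y, HasFDerivAt (T2 f) (fderiv ℝ (T2 f) y) y :=
    fun y => (hf.differentiable (by simp) y).hasFDerivAt
  have h2 : HasFDerivAt (fderiv ℝ (T2 f)) (fderiv ℝ (fderiv ℝ (T2 f)) (t, x)) (t, x) :=
    (((hf.fderiv_right (m := (⊤ : ℕ∞)) (by simp)).differentiable (by simp)) (t, x)).hasFDerivAt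
  have hsym := second_derivative_symmetric hdiff h2 ((1:ℝ), (0:ℝ)) ((0:ℝ), (1:ℝ))
  have e1 : Dt (Dx f) t x
      = fderiv ℝ (fun q : ℝ × ℝ => fderiv ℝ (T2 f) q ((0:ℝ), (1:ℝ))) (t, x) ((1:ℝ), (0:ℝ)) := by
    have hfun : T2 (Dx f) = fun q : ℝ × ℝ => fderiv ℝ (T2 f) q ((0:ℝ), (1:ℝ)) :=
      funext fun q => Dx_eq hf q.1 q.2
    rw [Dt_eq (smooth2_Dx hf), hfun]
  have e2 : Dx (Dt f) t x
      = fderiv ℝ (fun q : ℝ × ℝ => fderiv ℝ (T2 f) q ((1:ℝ), (0:ℝ))) (t, x) ((0:ℝ), (1:ℝ)) := by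
    have hfun : T2 (Dt f) = fun q : ℝ × ℝ => fderiv ℝ (T2 f) q ((1:ℝ), (0:ℝ)) :=
      funext fun q => Dt_eq hf q.1 q.2
    rw [Dx_eq (smooth2_Dt hf), hfun]
  rw [e1, e2, fderiv_eval h2, fderiv_eval h2]
  exact hsym

lemma DtDx_expand {A B C f : ℝ → ℝ → ℝ} (hA : Smooth2 A) (hB : Smooth2 B) (hC : Smooth2 C)
    (hf : Smooth2 f)
    (hfsol : ∀ t x, Dt f t x = A t x * Dx (Dx f) t x + B t x * Dx f t x + C t x * f t x)
    (t x : ℝ) :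
    Dt (Dx f) t x = Dx A t x * Dx (Dx f) t x + A t x * Dx (Dx (Dx f)) t x
      + (Dx B t x * Dx f t x + B t x * Dx (Dx f) t x)
      + (Dx C t x * f t x + C t x * Dx f t x) := by
  rw [clairaut2 hf]
  have hfun : (fun y => Dt f t y)
      = fun y => A t y * Dx (Dx f) t y + B t y * Dx f t y + C t y * f t y :=
    funext fun y => hfsol t y
  have h := (((hasDerivAt_x hA t x).mul (hasDerivAt_x (smooth2_Dx (smooth2_Dx hf)) t x)).add
      ((hasDerivAt_x hB t x).mul (hasDerivAt_x (smooth2_Dx hf) t x))).add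
      ((hasDerivAt_x hC t x).mul (hasDerivAt_x hf t x))
  show deriv (fun y => Dt f t y) x = _
  rw [hfun]
  exact h.deriv

theorem stmt_7 (A B C : ℝ → ℝ → ℝ) (hA : Smooth2 A) (hB : Smooth2 B) (hC : Smooth2 C)
    (hA0 : ∀ t x, A t x ≠ 0)
    (η : ℝ → ℝ → ℝ → ℝ) (hη : Smooth3 η) (hdet : DetEq0 A B C η)
    (f : ℝ → ℝ → ℝ) (hf : Smooth2 f)
    (hfsol : ∀ t x, Dt f t x = A t x * Dx (Dx f) t x + B t x * Dx f t x + C t x * f t x) :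
    DetEq0 A B C (fun t x v => η t x (v - f t x) + Dx f t x) := by
  have hEu : ∀ t x v, Eu (fun t x v => η t x (v - f t x) + Dx f t x) t x v
      = Eu η t x (v - f t x) := fun t x v =>
    ((comp_hasDerivAt_u hη (f := f) t x v (f t x)).add_const (Dx f t x)).deriv
  have hEx : ∀ t x v, Ex (fun t x v => η t x (v - f t x) + Dx f t x) t x v
      = Ex η t x (v - f t x) - Eu η t x (v - f t x) * Dx f t x + Dx (Dx f) t x :=
    fun t x v =>
    ((comp_hasDerivAt_x hη hf t x v).add (hasDerivAt_x (smooth2_Dx hf) t x)).deriv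
  have hEt : ∀ t x v, Et (fun t x v => η t x (v - f t x) + Dx f t x) t x v
      = Et η t x (v - f t x) - Eu η t x (v - f t x) * Dt f t x + Dt (Dx f) t x :=
    fun t x v =>
    ((comp_hasDerivAt_t hη hf t x v).add (hasDerivAt_t (smooth2_Dx hf) t x)).deriv
  have hEuEu : ∀ t x v, Eu (Eu (fun t x v => η t x (v - f t x) + Dx f t x)) t x v
      = Eu (Eu η) t x (v - f t x) := by
    intro t x v
    have hfun : (fun w => Eu (fun t x v => η t x (v - f t x) + Dx f t x) t x w)
        = fun w => Eu η t x (w - f t x) := funext fun w => hEu t x w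
    show deriv (fun w => Eu (fun t x v => η t x (v - f t x) + Dx f t x) t x w) v = _
    rw [hfun]
    exact (comp_hasDerivAt_u (smooth3_Eu hη) (f := f) t x v (f t x)).deriv
  have hEuEx : ∀ t x v, Eu (Ex (fun t x v => η t x (v - f t x) + Dx f t x)) t x v
      = Eu (Ex η) t x (v - f t x) - Eu (Eu η) t x (v - f t x) * Dx f t x := by
    intro t x v
    have hfun : (fun w => Ex (fun t x v => η t x (v - f t x) + Dx f t x) t x w)
        = fun w => Ex η t x (w - f t x) - Eu η t x (w - f t x) * Dx f t x + Dx (Dx f) t x :=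
      funext fun w => hEx t x w
    show deriv (fun w => Ex (fun t x v => η t x (v - f t x) + Dx f t x) t x w) v = _
    rw [hfun]
    exact (((comp_hasDerivAt_u (smooth3_Ex hη) (f := f) t x v (f t x)).sub
      ((comp_hasDerivAt_u (smooth3_Eu hη) (f := f) t x v (f t x)).mul_const
        (Dx f t x))).add_const (Dx (Dx f) t x)).deriv
  have hExEx : ∀ t x v, Ex (Ex (fun t x v => η t x (v - f t x) + Dx f t x)) t x v
      = Ex (Ex η) t x (v - f t x) - Eu (Ex η) t x (v - f t x) * Dx f t x
        - ((Ex (Eu η) t x (v - f t x) - Eu (Eu η) t x (v - f t x) * Dx f t x) * Dx f t x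
          + Eu η t x (v - f t x) * Dx (Dx f) t x)
        + Dx (Dx (Dx f)) t x := by
    intro t x v
    have hfun : (fun y => Ex (fun t x v => η t x (v - f t x) + Dx f t x) t y v)
        = fun y => Ex η t y (v - f t y) - Eu η t y (v - f t y) * Dx f t y + Dx (Dx f) t y :=
      funext fun y => hEx t y v
    show deriv (fun y => Ex (fun t x v => η t x (v - f t x) + Dx f t x) t y v) x = _
    rw [hfun]
    exact (((comp_hasDerivAt_x (smooth3_Ex hη) hf t x v).sub
      ((comp_hasDerivAt_x (smooth3_Eu hη) hf t x v).mul
        (hasDerivAt_x (smooth2_Dx hf) t x))).add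
      (hasDerivAt_x (smooth2_Dx (smooth2_Dx hf)) t x)).deriv
  intro t x v
  rw [hEt, hEx, hEu, hEuEu, hEuEx, hExEx]
  rw [hdet t x (v - f t x), hfsol t x, DtDx_expand hA hB hC hf hfsol t x]
  simp only [clairaut3 hη]
  ring
end

section
/- Let B : ℝ² → ℝ be smooth and let v be a smooth solution of v_t = v_{xx} + Bv_x with v_x nowhere zero. Then the function g¹ := −v_{xx}/v_x − B satisfies the equation g¹_t − g¹_{xx} + 2g¹g¹_x + (Bg¹)_x + B_t = 0. -/
section helpers
variable {u : ℝ → ℝ → ℝ}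

lemma Smooth2.sliceX (h : Smooth2 u) (t : ℝ) : ContDiff ℝ (⊤ : ℕ∞) (fun y => u t y) :=
  h.comp (contDiff_const.prodMk contDiff_id)

lemma Smooth2.sliceT (h : Smooth2 u) (x : ℝ) : ContDiff ℝ (⊤ : ℕ∞) (fun s => u s x) :=
  h.comp (contDiff_id.prodMk contDiff_const)

lemma hasX (h : Smooth2 u) (t x : ℝ) : HasDerivAt (fun y => u t y) (Dx u t x) x :=
  ((h.sliceX t).differentiable (by simp) x).hasDerivAt

lemma hasT (h : Smooth2 u) (t x : ℝ) : HasDerivAt (fun s => u s x) (Dt u t x) t :=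
  ((h.sliceT x).differentiable (by simp) t).hasDerivAt

lemma Dx_eq_fderiv (h : Smooth2 u) (t x : ℝ) :
    Dx u t x = fderiv ℝ (fun p : ℝ × ℝ => u p.1 p.2) (t, x) (0, 1) :=
  (((h.differentiable (by simp) (t, x)).hasFDerivAt).comp_hasDerivAt x
    ((hasDerivAt_const x t).prodMk (hasDerivAt_id x))).deriv

lemma Dt_eq_fderiv (h : Smooth2 u) (t x : ℝ) :
    Dt u t x = fderiv ℝ (fun p : ℝ × ℝ => u p.1 p.2) (t, x) (1, 0) :=
  by have := (((h.differentiable (by simp) (t, x)).hasFDerivAt).comp_hasDerivAt t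
    ((hasDerivAt_id' t).prodMk (hasDerivAt_const t x))).deriv; exact this

lemma smooth2_Dx_s12 (h : Smooth2 u) : Smooth2 (Dx u) := by
  have h1 : (fun p : ℝ × ℝ => Dx u p.1 p.2)
      = fun p => fderiv ℝ (fun p : ℝ × ℝ => u p.1 p.2) p (0, 1) := by
    funext p
    exact Dx_eq_fderiv h p.1 p.2
  rw [Smooth2, h1]
  exact (h.fderiv_right (by simp)).clm_apply contDiff_const

lemma comm2 (h : Smooth2 u) (t x : ℝ) : Dt (Dx u) t x = Dx (Dt u) t x := by
  set F := fun p : ℝ × ℝ => u p.1 p.2 with hF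
  have hFc : ContDiff ℝ (⊤ : ℕ∞) F := h
  have hf : ∀ y, HasFDerivAt F (fderiv ℝ F y) y :=
    fun y => (hFc.differentiable (by simp) y).hasFDerivAt
  have hF' : ContDiff ℝ (⊤ : ℕ∞) (fderiv ℝ F) := hFc.fderiv_right (by simp)
  have hx : HasFDerivAt (fderiv ℝ F) (fderiv ℝ (fderiv ℝ F) (t, x)) (t, x) :=
    (hF'.differentiable (by simp) (t, x)).hasFDerivAt
  have hsymm := second_derivative_symmetric hf hx (1, 0) (0, 1)
  have h1 : Dt (Dx u) t x = fderiv ℝ (fderiv ℝ F) (t, x) (1, 0) (0, 1) := by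
    have hc : HasDerivAt (fun s : ℝ => fderiv ℝ F (s, x))
        (fderiv ℝ (fderiv ℝ F) (t, x) (1, 0)) t :=
      hx.comp_hasDerivAt t ((hasDerivAt_id t).prodMk (hasDerivAt_const t x))
    have h2 := hc.clm_apply (hasDerivAt_const t ((0 : ℝ), (1 : ℝ)))
    simp only [map_zero, add_zero] at h2
    have heq : (fun s => Dx u s x) = fun s => fderiv ℝ F (s, x) (0, 1) :=
      funext fun s => Dx_eq_fderiv h s x
    show deriv (fun s => Dx u s x) t = _
    rw [heq]
    exact h2.deriv
  have h3 : Dx (Dt u) t x = fderiv ℝ (fderiv ℝ F) (t, x) (0, 1) (1, 0) := by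
    have hc : HasDerivAt (fun y : ℝ => fderiv ℝ F (t, y))
        (fderiv ℝ (fderiv ℝ F) (t, x) (0, 1)) x :=
      hx.comp_hasDerivAt x ((hasDerivAt_const x t).prodMk (hasDerivAt_id x))
    have h2 := hc.clm_apply (hasDerivAt_const x ((1 : ℝ), (0 : ℝ)))
    simp only [map_zero, add_zero] at h2
    have heq : (fun y => Dt u t y) = fun y => fderiv ℝ F (t, y) (1, 0) :=
      funext fun y => Dt_eq_fderiv h t y
    show deriv (fun y => Dt u t y) x = _
    rw [heq]
    exact h2.deriv
  rw [h1, h3, hsymm]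

end helpers

theorem stmt_12 (B : ℝ → ℝ → ℝ) (hB : Smooth2 B)
    (v : ℝ → ℝ → ℝ) (hv : Smooth2 v)
    (hvsol : ∀ t x, Dt v t x = Dx (Dx v) t x + B t x * Dx v t x)
    (hvx0 : ∀ t x, Dx v t x ≠ 0)
    (g1 : ℝ → ℝ → ℝ)
    (hg1 : ∀ t x, g1 t x = - Dx (Dx v) t x / Dx v t x - B t x) :
    ∀ t x, Dt g1 t x - Dx (Dx g1) t x + 2 * g1 t x * Dx g1 t x
      + Dx (fun t x => B t x * g1 t x) t x + Dt B t x = 0 := by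
  have hv1 : Smooth2 (Dx v) := smooth2_Dx_s12 hv
  have hv2 : Smooth2 (Dx (Dx v)) := smooth2_Dx_s12 hv1
  have hv3 : Smooth2 (Dx (Dx (Dx v))) := smooth2_Dx_s12 hv2
  have hB1 : Smooth2 (Dx B) := smooth2_Dx_s12 hB
  have hg' : g1 = fun t x => -Dx (Dx v) t x / Dx v t x - B t x :=
    funext fun t => funext fun x => hg1 t x
  have hDtvf : Dt v = fun t x => Dx (Dx v) t x + B t x * Dx v t x :=
    funext fun t => funext fun x => hvsol t x
  have hDtvx : ∀ t x, Dt (Dx v) t x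
      = Dx (Dx (Dx v)) t x + (Dx B t x * Dx v t x + B t x * Dx (Dx v) t x) := by
    intro t x
    rw [comm2 hv t x, hDtvf]
    exact ((hasX hv2 t x).add ((hasX hB t x).mul (hasX hv1 t x))).deriv
  have hDtvxf : Dt (Dx v)
      = fun t x => Dx (Dx (Dx v)) t x + (Dx B t x * Dx v t x + B t x * Dx (Dx v) t x) :=
    funext fun t => funext fun x => hDtvx t x
  have hDtvxx : ∀ t x, Dt (Dx (Dx v)) t x
      = Dx (Dx (Dx (Dx v))) t x
        + ((Dx (Dx B) t x * Dx v t x + Dx B t x * Dx (Dx v) t x)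
          + (Dx B t x * Dx (Dx v) t x + B t x * Dx (Dx (Dx v)) t x)) := by
    intro t x
    rw [comm2 hv1 t x, hDtvxf]
    exact ((hasX hv3 t x).add
      (((hasX hB1 t x).mul (hasX hv1 t x)).add ((hasX hB t x).mul (hasX hv2 t x)))).deriv
  intro t x
  have hgx : Dx (fun t x => -Dx (Dx v) t x / Dx v t x - B t x)
      = fun t x => (-Dx (Dx (Dx v)) t x * Dx v t x - -Dx (Dx v) t x * Dx (Dx v) t x)
          / Dx v t x ^ 2 - Dx B t x := by
    funext t x
    exact (((hasX hv2 t x).neg.div (hasX hv1 t x) (hvx0 t x)).sub (hasX hB t x)).deriv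
  have hgxx : Dx (fun t x => (-Dx (Dx (Dx v)) t x * Dx v t x
        - -Dx (Dx v) t x * Dx (Dx v) t x) / Dx v t x ^ 2 - Dx B t x) t x = _ :=
    ((((((hasX hv3 t x).neg.mul (hasX hv1 t x)).sub
        ((hasX hv2 t x).neg.mul (hasX hv2 t x))).div
      ((hasX hv1 t x).pow 2) (pow_ne_zero 2 (hvx0 t x))).sub (hasX hB1 t x))).deriv
  have hgt : Dt (fun t x => -Dx (Dx v) t x / Dx v t x - B t x) t x = _ :=
    (((hasT hv2 t x).neg.div (hasT hv1 t x) (hvx0 t x)).sub (hasT hB t x)).deriv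
  have hBg : Dx (fun t x => B t x * (-Dx (Dx v) t x / Dx v t x - B t x)) t x = _ :=
    ((hasX hB t x).mul
      (((hasX hv2 t x).neg.div (hasX hv1 t x) (hvx0 t x)).sub (hasX hB t x))).deriv
  rw [hDtvx, hDtvxx] at hgt
  simp only [hg']
  simp only [hgx]
  rw [hgt, hgxx, hBg]
  simp only [Pi.neg_apply, Pi.pow_apply, Pi.mul_apply, Pi.div_apply, Pi.sub_apply]
  have h0 : Dx v t x ≠ 0 := hvx0 t x
  field_simp
  ring
end
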